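/- arXiv:1705.05479 — 2 statements merged into one kernel-verified Lean document; each statement's English description precedes it below -/
import Mathlib

section
/- Let s = (0,0) and t = (t_x, t_y) with t_x ≥ 0 and t_y ≥ 0. Then t_x + t_y + 2·max(t_x, t_y) ≤ (2 + √2) · dist_E(s,t), where dist_E is the Euclidean distance. -/
lemma aux (a b : ℝ) (hb : 0 ≤ b) (hab : b ≤ a) :
    3 * a + b ≤ (2 + Real.sqrt 2) * Real.sqrt (a ^ 2 + b ^ 2) := by
  have h2 : Real.sqrt 2 ^ 2 = 2 := Real.sq_sqrt (by norm_num)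
  have h2n : (1:ℝ) ≤ Real.sqrt 2 := by
    nlinarith [Real.sqrt_nonneg 2]
  have hs : Real.sqrt (a ^ 2 + b ^ 2) ^ 2 = a ^ 2 + b ^ 2 :=
    Real.sq_sqrt (by positivity)
  have hsa : a ≤ Real.sqrt (a ^ 2 + b ^ 2) := by
    nlinarith [Real.sqrt_nonneg (a ^ 2 + b ^ 2), sq_nonneg b]
  have hsn : 0 ≤ Real.sqrt (a ^ 2 + b ^ 2) := Real.sqrt_nonneg _
  nlinarith [sq_nonneg ((2 + Real.sqrt 2) * Real.sqrt (a ^ 2 + b ^ 2) - (3 * a + b)),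
    sq_nonneg (a - (Real.sqrt 2 + 1) * b), sq_nonneg (Real.sqrt 2 - 1),
    mul_nonneg hsn (sub_nonneg.2 h2n)]

/-- For `t = (tx, ty)` with nonnegative coordinates,
`tx + ty + 2·max(tx,ty) ≤ (2 + √2) · dist_E((0,0), t)`. -/
theorem stmt_1 (tx ty : ℝ) (hx : 0 ≤ tx) (hy : 0 ≤ ty) :
    tx + ty + 2 * max tx ty ≤ (2 + Real.sqrt 2) * Real.sqrt (tx ^ 2 + ty ^ 2) := by
  rcases le_total ty tx with h | h
  · rw [max_eq_left h]; have := aux tx ty hy h; linarith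
  · rw [max_eq_right h]
    have := aux ty tx hx h
    rw [add_comm (ty^2)] at this; linarith
end

section
/- Let s = (0,0) and let t lie in the cone C_right = { (x,y) : x ≥ |y| }. Then t_x + t_y + 2·max(t_x, |t_y|) ≤ (2 + √2)·dist_E(s,t). -/
/-- For `s = (0,0)` and `t` in the cone `C_right = {(x,y) : x ≥ |y|}`,
`t_x + t_y + 2·max(t_x, |t_y|) ≤ (2 + √2)·dist_E(s,t)`. -/
theorem stmt_2 (t : ℝ × ℝ) (h : |t.2| ≤ t.1) :
    t.1 + t.2 + 2 * max t.1 |t.2| ≤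
      (2 + Real.sqrt 2) * Real.sqrt (t.1 ^ 2 + t.2 ^ 2) := by
  rw [max_eq_left h]
  set x := t.1; set y := t.2
  have hr := Real.sq_sqrt (by positivity : (0:ℝ) ≤ x ^ 2 + y ^ 2)
  have hr0 := Real.sqrt_nonneg (x ^ 2 + y ^ 2)
  have h2 := Real.sq_sqrt (by norm_num : (0:ℝ) ≤ 2)
  have h2' := Real.sqrt_nonneg 2
  have h21 : (1:ℝ) ≤ Real.sqrt 2 := by
    nlinarith
  set r := Real.sqrt (x ^ 2 + y ^ 2)
  have hy := abs_nonneg y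
  have hy1 : y ≤ |y| := le_abs_self y
  have hy2 : -y ≤ |y| := neg_le_abs y
  have hx : 0 ≤ x := le_trans hy h
  have hpos : 0 ≤ 3 * x + y := by linarith
  have key : (3 * x + y) ^ 2 ≤ ((2 + Real.sqrt 2) * r) ^ 2 := by
    have : ((2 + Real.sqrt 2) * r) ^ 2 = (6 + 4 * Real.sqrt 2) * (x ^ 2 + y ^ 2) := by
      ring_nf
      nlinarith [hr, h2]
    rw [this]
    nlinarith [sq_nonneg (x - 3*y), sq_nonneg x, sq_nonneg y]
  have hpos2 : 0 ≤ (2 + Real.sqrt 2) * r := by positivity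
  nlinarith [key, hpos, hpos2]
end
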